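/- Let X and Y be Noetherian sober topological spaces (equivalently, Noetherian spectral spaces) and let f : X → Y be a continuous bijection. Then f is a homeomorphism if and only if f lifts specializations, i.e. for every x ∈ X and every y ∈ Y with y ∈ closure({f(x)}) there exists x' ∈ closure({x}) such that f(x') = y. Equivalently, under the lifting hypothesis the image under f of every closed subset of X is closed in Y. -/
import Mathlib


open TopologicalSpace

/-- Let `X` and `Y` be Noetherian sober (equivalently, Noetherian spectral)
spaces and `f : X → Y` a continuous bijection. Then `f` is a homeomorphism if and only if
`f` lifts specializations: for every `x : X` and `y : Y` with `y ∈ closure {f x}` there is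
`x' ∈ closure {x}` with `f x' = y` (equivalently, `f` maps closed sets to closed sets). -/
theorem statement1 {X Y : Type*} [TopologicalSpace X] [TopologicalSpace Y]
    [NoetherianSpace X] [T0Space X] [QuasiSober X]
    [NoetherianSpace Y] [T0Space Y] [QuasiSober Y]
    (f : X → Y) (hf : Continuous f) (hfbij : Function.Bijective f) :
    IsHomeomorph f ↔
      (∀ (x : X) (y : Y), y ∈ closure {f x} → ∃ x' ∈ closure {x}, f x' = y) := by
  constructor
  · rintro hh x y hy
    obtain ⟨e, rfl⟩ := isHomeomorph_iff_exists_homeomorph.mp hh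
    have hsp : e x ⤳ y := specializes_iff_mem_closure.mpr hy
    have := hsp.map e.symm.continuous
    simp only [Homeomorph.symm_apply_apply] at this
    exact ⟨e.symm y, specializes_iff_mem_closure.mp this, by simp⟩
  · intro h
    -- first: f maps closures of singletons onto closures of singletons
    have key : ∀ x : X, f '' closure {x} = closure {f x} := by
      intro x
      apply subset_antisymm
      · have := image_closure_subset_closure_image (f := f) (s := ({x} : Set X)) hf
        rwa [Set.image_singleton] at this
      · rintro y hy
        obtain ⟨x', hx', rfl⟩ := h x y hy
        exact Set.mem_image_of_mem f hx'
    -- f is a closed map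
    have hclosed : IsClosedMap f := by
      intro s hs
      obtain ⟨S, hSfin, hScl, hSirr, rfl⟩ :=
        NoetherianSpace.exists_finite_set_isClosed_irreducible hs
      rw [Set.sUnion_eq_biUnion, Set.image_iUnion₂]
      refine Set.Finite.isClosed_biUnion hSfin fun t ht => ?_
      have hgen : closure {(hSirr t ht).genericPoint} = t :=
        (hSirr t ht).isGenericPoint_genericPoint (hScl t ht)
      rw [← hgen, key]
      exact isClosed_closure
    have hopen : IsOpenMap f := by
      intro u hu
      have : f '' u = (f '' uᶜ)ᶜ := by
        rw [Set.image_compl_eq hfbij, compl_compl]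
      rw [this]
      exact (hclosed _ hu.isClosed_compl).isOpen_compl
    exact ⟨hf, hopen, hfbij⟩
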